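/- The DP-chromatic number of every cycle (in particular every even cycle) equals 3. -/

import Mathlib

open SimpleGraph

/-- The chromatic number of a graph, as a natural number. -/
noncomputable def chi {V : Type*} (G : SimpleGraph V) : ℕ := sInf {m | G.Colorable m}

/-- The join `J(G, A)` of a graph `G` with a clique on the vertex type `α`:
every vertex of `α` is adjacent to every vertex of `G` and to every other vertex of `α`. -/
def JoinT {V : Type*} (G : SimpleGraph V) (α : Type*) : SimpleGraph (V ⊕ α) where
  Adj a b :=
    match a, b with
    | Sum.inl u, Sum.inl v => G.Adj u v
    | Sum.inl _, Sum.inr _ => True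
    | Sum.inr _, Sum.inl _ => True
    | Sum.inr i, Sum.inr j => i ≠ j
  symm := ⟨by
    rintro (u | i) (v | j) h
    · exact G.adj_symm h
    · trivial
    · trivial
    · exact Ne.symm h⟩
  loopless := ⟨by
    rintro (u | i) h
    · exact G.irrefl h
    · exact h rfl⟩

/-- The join `J(G, s)` of `G` with the complete graph `K_s`. -/
def Join {V : Type*} (G : SimpleGraph V) (s : ℕ) : SimpleGraph (V ⊕ Fin s) := JoinT G (Fin s)

/-- `(L, H)` is a cover of `G`. -/
def IsCover {V W : Type*} (G : SimpleGraph V) (H : SimpleGraph W) (L : V → Finset W) : Prop :=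
  (∀ w : W, ∃! v : V, w ∈ L v) ∧
  (∀ u v : V, ∀ x ∈ L u, ∀ y ∈ L v, H.Adj x y → u = v ∨ G.Adj u v) ∧
  (∀ u : V, ∀ x ∈ L u, ∀ y ∈ L u, x ≠ y → H.Adj x y) ∧
  (∀ u v : V, G.Adj u v →
    ∀ x ∈ L u, ∀ y ∈ L v, ∀ y' ∈ L v, H.Adj x y → H.Adj x y' → y = y')

/-- An `(L, H)`-coloring: an independent set of `H` meeting each list in exactly one vertex. -/
def IsDPColoring {V W : Type*} (H : SimpleGraph W) (L : V → Finset W) (I : Set W) : Prop :=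
  (∀ x ∈ I, ∀ y ∈ I, ¬ H.Adj x y) ∧ ∀ v : V, ∃! x, x ∈ I ∧ x ∈ L v

/-- `G` is DP-colorable from every cover all of whose lists have size at least `k`. -/
def DPColorable {V : Type*} (G : SimpleGraph V) (k : ℕ) : Prop :=
  ∀ (W : Type) (H : SimpleGraph W) (L : V → Finset W),
    IsCover G H L → (∀ v, k ≤ (L v).card) → ∃ I : Set W, IsDPColoring H L I

/-- The DP-chromatic number. -/
noncomputable def dpChi {V : Type*} (G : SimpleGraph V) : ℕ := sInf {k | DPColorable G k}

/-- `G` is `k`-choosable: it has a proper coloring from any list assignment with lists of size `k`. -/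
def Choosable {V : Type*} (G : SimpleGraph V) (k : ℕ) : Prop :=
  ∀ L : V → Finset ℕ, (∀ v, k ≤ (L v).card) →
    ∃ f : V → ℕ, (∀ v, f v ∈ L v) ∧ ∀ u v : V, G.Adj u v → f u ≠ f v

/-- The list chromatic number. -/
noncomputable def listChi {V : Type*} (G : SimpleGraph V) : ℕ := sInf {k | Choosable G k}

/-!
Upper bound: in a cover, a vertex of `L u` is adjacent to at most one vertex of `L v` when `u ≠ v`,
so if every list is longer than the degree of its vertex the lists can be coloured greedily; cycles
are `2`-regular.

Lower bound: for signs `σ` on the edges, the signed lift on `V × ZMod 2` joins `(u, a)` to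
`(v, a + σ uv)`. Its DP-colourings give maps `f : V → ZMod 2` with `f v - f u = σ uv + 1` along
every edge. Around `C_n` these differences telescope to `0`, which is impossible once the signs sum
to `n + 1`.
-/

section Cover

variable {V W : Type*} {G : SimpleGraph V} {H : SimpleGraph W} {L : V → Finset W}

theorem DPColorable.mono {k m : ℕ} (h : DPColorable G k) (hkm : k ≤ m) : DPColorable G m :=
  fun W H L hc hL => h W H L hc fun v => hkm.trans (hL v)

theorem dpChi_eq_of_dpColorable_of_not_dpColorable {k : ℕ} (h : DPColorable G (k + 1))
    (h' : ¬ DPColorable G k) : dpChi G = k + 1 := by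
  refine le_antisymm (Nat.sInf_le h) (le_csInf ⟨_, h⟩ fun m hm => ?_)
  by_contra! hmk
  exact h' (DPColorable.mono hm (by omega))

theorem IsCover.card_filter_adj_le_one [DecidableRel H.Adj] (hc : IsCover G H L) {u v : V}
    (huv : u ≠ v) {y : W} (hy : y ∈ L u) : ((L v).filter (H.Adj y)).card ≤ 1 := by
  refine Finset.card_le_one.2 fun a ha b hb => ?_
  rw [Finset.mem_filter] at ha hb
  obtain huv' | hadj := hc.2.1 u v y hy a ha.1 ha.2
  · exact absurd huv' huv
  · exact hc.2.2.2 u v hadj y hy a ha.1 b hb.1 ha.2 hb.2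

theorem IsCover.exists_mem_forall_not_adj [G.LocallyFinite] [DecidableEq W] [DecidableRel H.Adj]
    (hc : IsCover G H L) {f : V → W} (hf : ∀ v, f v ∈ L v) {a : V}
    (ha : G.degree a < (L a).card) : ∃ x ∈ L a, ∀ u, G.Adj a u → ¬ H.Adj (f u) x := by
  let blocked := (G.neighborFinset a).biUnion fun u => (L a).filter (H.Adj (f u))
  have hblocked : blocked.card < (L a).card := calc
    blocked.card ≤ ∑ u ∈ G.neighborFinset a, ((L a).filter (H.Adj (f u))).card :=
      Finset.card_biUnion_le
    _ ≤ ∑ _u ∈ G.neighborFinset a, 1 := Finset.sum_le_sum fun u hu =>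
      hc.card_filter_adj_le_one ((G.mem_neighborFinset a u).1 hu).ne.symm (hf u)
    _ < (L a).card := by simpa using ha
  obtain ⟨x, hx, hxb⟩ := Finset.exists_mem_notMem_of_card_lt_card hblocked
  refine ⟨x, hx, fun u hau hux => hxb ?_⟩
  exact Finset.mem_biUnion.2 ⟨u, (G.mem_neighborFinset a u).2 hau, Finset.mem_filter.2 ⟨hx, hux⟩⟩

theorem IsCover.isDPColoring_range (hc : IsCover G H L) {f : V → W} (hf : ∀ v, f v ∈ L v)
    (hind : ∀ u v, ¬ H.Adj (f u) (f v)) : IsDPColoring H L (Set.range f) := by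
  refine ⟨?_, fun v => ⟨f v, ⟨⟨v, rfl⟩, hf v⟩, ?_⟩⟩
  · rintro _ ⟨u, rfl⟩ _ ⟨v, rfl⟩
    exact hind u v
  · rintro _ ⟨⟨u, rfl⟩, hu⟩
    rw [(hc.1 (f u)).unique hu (hf u)]

theorem IsCover.exists_independent_on [G.LocallyFinite] (hc : IsCover G H L) {k : ℕ}
    (hk : ∀ v, G.degree v < k) (hL : ∀ v, k ≤ (L v).card) (S : Finset V) :
    ∃ f : V → W, (∀ v, f v ∈ L v) ∧ ∀ u ∈ S, ∀ v ∈ S, ¬ H.Adj (f u) (f v) := by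
  classical
  induction S using Finset.induction_on with
  | empty =>
    have hne v : (L v).Nonempty :=
      Finset.card_pos.1 ((Nat.zero_le _).trans_lt ((hk v).trans_le (hL v)))
    exact ⟨fun v => (hne v).choose, fun v => (hne v).choose_spec, by simp⟩
  | insert a S haS ih =>
    obtain ⟨f, hf, hind⟩ := ih
    obtain ⟨x, hx, hxf⟩ := hc.exists_mem_forall_not_adj hf ((hk a).trans_le (hL a))
    have hf' : ∀ v, Function.update f a x v ∈ L v := by
      intro v
      rcases eq_or_ne v a with rfl | hva
      · simpa using hx
      · simpa [hva] using hf v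
    have hnew : ∀ v ∈ S, ¬ H.Adj (f v) x := by
      intro v hv hvx
      obtain hva | hadj := hc.2.1 v a (f v) (hf v) x hx hvx
      · exact haS (hva ▸ hv)
      · exact hxf v hadj.symm hvx
    refine ⟨Function.update f a x, hf', ?_⟩
    intro u hu v hv
    have hne : ∀ w ∈ S, w ≠ a := fun w hw h => haS (h ▸ hw)
    rw [Finset.mem_insert] at hu hv
    rcases hu with rfl | hu <;> rcases hv with rfl | hv
    · exact H.irrefl
    · simpa [hne v hv] using fun h => hnew v hv h.symm
    · simpa [hne u hu] using hnew u hu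
    · simpa [hne u hu, hne v hv] using hind u hu v hv

theorem dpColorable_of_forall_degree_lt [Finite V] [G.LocallyFinite] {k : ℕ}
    (hk : ∀ v, G.degree v < k) : DPColorable G k := by
  intro W H L hc hL
  have := Fintype.ofFinite V
  obtain ⟨f, hf, hind⟩ := hc.exists_independent_on hk hL Finset.univ
  exact ⟨_, hc.isDPColoring_range hf fun u v => hind u (Finset.mem_univ _) v (Finset.mem_univ _)⟩

end Cover

section SignedCover

variable {V : Type*} (G : SimpleGraph V) (σ : Sym2 V → ZMod 2)

def signedCover : SimpleGraph (V × ZMod 2) where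
  Adj p q := (p.1 = q.1 ∧ p.2 ≠ q.2) ∨ (G.Adj p.1 q.1 ∧ q.2 = p.2 + σ s(p.1, q.1))
  symm := ⟨by
    rintro ⟨u, a⟩ ⟨v, b⟩ (⟨huv, hab⟩ | ⟨huv, hab⟩)
    · exact .inl ⟨huv.symm, hab.symm⟩
    · refine .inr ⟨huv.symm, ?_⟩
      rw [Sym2.eq_swap, hab, add_assoc, CharTwo.add_self_eq_zero, add_zero]⟩
  loopless := ⟨by
    rintro ⟨u, a⟩ (⟨_, h⟩ | ⟨h, _⟩)
    · exact h rfl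
    · exact G.irrefl h⟩

theorem isCover_signedCover :
    IsCover G (signedCover G σ) fun v => {v} ×ˢ Finset.univ := by
  simp only [IsCover, Finset.mem_product, Finset.mem_singleton, Finset.mem_univ, and_true]
  refine ⟨fun w => ⟨w.1, rfl, fun _ h => h.symm⟩, ?_, ?_, ?_⟩
  · rintro u v x rfl y rfl (⟨h, _⟩ | ⟨h, _⟩)
    exacts [.inl h, .inr h]
  · rintro u x rfl y hy hxy
    exact .inl ⟨hy.symm, fun h => hxy (Prod.ext hy.symm h)⟩
  · rintro u v huv x rfl y rfl y' hy' hxy hxy'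
    obtain ⟨h, _⟩ | ⟨_, hy⟩ := hxy
    · exact absurd h huv.ne
    obtain ⟨h, _⟩ | ⟨_, hy''⟩ := hxy'
    · exact absurd (h.trans hy') huv.ne
    exact Prod.ext hy'.symm (hy.trans (hy' ▸ hy''.symm))

variable {G σ} in
theorem IsDPColoring.exists_signedCover {I : Set (V × ZMod 2)}
    (hI : IsDPColoring (signedCover G σ) (fun v => {v} ×ˢ Finset.univ) I) :
    ∃ f : V → ZMod 2, ∀ u v, G.Adj u v → f v ≠ f u + σ s(u, v) := by
  choose x hx _ using hI.2
  have hx1 v : (x v).1 = v := Finset.mem_singleton.1 (Finset.mem_product.1 (hx v).2).1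
  refine ⟨fun v => (x v).2, fun u v huv hf => hI.1 _ (hx u).1 _ (hx v).1 (.inr ?_)⟩
  rw [hx1, hx1]
  exact ⟨huv, hf⟩

end SignedCover

theorem not_dpColorable_two_of_forall_exists {V : Type} {G : SimpleGraph V} (σ : Sym2 V → ZMod 2)
    (h : ∀ f : V → ZMod 2, ∃ u v, G.Adj u v ∧ f v = f u + σ s(u, v)) : ¬ DPColorable G 2 := by
  intro hG
  obtain ⟨I, hI⟩ := hG _ _ _ (isCover_signedCover G σ) fun v => by simp
  obtain ⟨f, hf⟩ := hI.exists_signedCover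
  obtain ⟨u, v, huv, hfuv⟩ := h f
  exact hf u v huv hfuv

theorem cycleGraph_adj_add_one {n : ℕ} (i : Fin (n + 2)) : (cycleGraph (n + 2)).Adj i (i + 1) := by
  simp [cycleGraph_adj]

theorem Fin.sum_add_one_sub_eq_zero {n : ℕ} [NeZero n] {M : Type*} [AddCommGroup M]
    (f : Fin n → M) : ∑ i, (f (i + 1) - f i) = 0 := by
  rw [Finset.sum_sub_distrib, sub_eq_zero]
  exact Fintype.sum_equiv (Equiv.addRight 1) _ _ fun _ => rfl

theorem sym2_add_one_eq_neg_one_zero_iff {m : ℕ} {i : Fin (m + 3)} :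
    s(i, i + 1) = s(-1, 0) ↔ i = -1 := by
  refine ⟨fun h => ?_, fun h => by simp [h]⟩
  rw [Sym2.eq_iff] at h
  rcases h with ⟨h, _⟩ | ⟨rfl, h⟩
  · exact h
  · simp [Fin.ext_iff] at h

def cycleSign (n : ℕ) [NeZero n] (e : Sym2 (Fin n)) : ZMod 2 := if e = s(-1, 0) then n + 1 else 0

theorem sum_cycleSign (m : ℕ) :
    ∑ i : Fin (m + 3), cycleSign (m + 3) s(i, i + 1) = (m + 3 : ℕ) + 1 := by
  simp only [cycleSign, sym2_add_one_eq_neg_one_zero_iff]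
  simp

theorem not_dpColorable_two_cycleGraph (m : ℕ) : ¬ DPColorable (cycleGraph (m + 3)) 2 := by
  refine not_dpColorable_two_of_forall_exists (cycleSign (m + 3)) fun f => ?_
  by_contra! hf
  have hstep i : f (i + 1) - f i = cycleSign (m + 3) s(i, i + 1) + 1 := by
    have sub_of_ne : ∀ x y c : ZMod 2, x ≠ y + c → x - y = c + 1 := by decide
    exact sub_of_ne _ _ _ (hf i (i + 1) (cycleGraph_adj_add_one i))
  have hsum := Fin.sum_add_one_sub_eq_zero f
  simp only [hstep, Finset.sum_add_distrib, sum_cycleSign, Finset.sum_const, Finset.card_univ,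
    Fintype.card_fin, nsmul_eq_mul, mul_one, add_right_comm _ (1 : ZMod 2),
    CharTwo.add_self_eq_zero, zero_add] at hsum
  exact one_ne_zero hsum

/-- The DP-chromatic number of every cycle (in particular every even cycle) equals `3`. -/
theorem dpChi_cycle (n : ℕ) (hn : 3 ≤ n) :
    dpChi (SimpleGraph.cycleGraph n) = 3 := by
  obtain ⟨m, rfl⟩ := Nat.exists_eq_add_of_le' hn
  exact dpChi_eq_of_dpColorable_of_not_dpColorable
    (dpColorable_of_forall_degree_lt fun _ => by simp [cycleGraph_degree_three_le])
    (not_dpColorable_two_cycleGraph m)
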